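/- Assume p ∈ (0,1), m ≥ 2, and X, Y ∈ ℝ^{D×N} whose Gram matrices are isotropic: X Xᵀ = a I and Y Yᵀ = b I for positive scalars a, b. Fix α > 0 and define the teacher matrix Ω_T = α ((X Xᵀ)^{-1} x_1)((Y Yᵀ)^{-1} y_1)ᵀ, where x_1, y_1 are the first columns of X, Y. With query token r = Σ_i a_i x_i and key tokens s_j = Σ_i b_{j,i} y_i generated from i.i.d. Bernoulli(p) coefficients, and population objective L(Ω) = E[ −Σ_{j=1}^m p_T(j) log p_Ω(j) ] where p_Ω = softmax(rᵀΩ s_1,…,rᵀΩ s_m) and p_T = softmax(rᵀΩ_T s_1,…,rᵀΩ_T s_m), the unique global minimizer of L is Ω* = (α/(ab)) x_1 y_1ᵀ. In particular Ω* has rank 1 and its nonzero left and right singular vectors are parallel to x_1 and y_1 respectively. -/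

import Mathlib

open MeasureTheory ProbabilityTheory Matrix Finset

noncomputable def softmax {m : ℕ} (a : Fin m → ℝ) : Fin m → ℝ :=
  fun i => Real.exp (a i) / ∑ k, Real.exp (a k)

/-!
Under isotropy `(X Xᵀ)⁻¹ = a⁻¹ I` and `(Y Yᵀ)⁻¹ = b⁻¹ I`, so the teacher `Ω_T` already equals
`Ω* = (α / (a b)) x₁ y₁ᵀ`. By Gibbs' inequality the cross-entropy against the teacher's attention
distribution is minimised pointwise by the teacher itself, so `Ω*` is a global minimiser, and a
matrix `Ω` attaining the minimum has the teacher's attention distribution almost surely.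
The Bernoulli coefficients are independent with `p ∈ (0, 1)`, so every 0/1 configuration has
positive probability; the one with query `r = x_i`, keys `s₁ = y_j` and `s₀ = 0` shows
`x_iᵀ Ω y_j = x_iᵀ Ω* y_j`. Hence `Xᵀ (Ω - Ω*) Y = 0`, and isotropy gives `Ω = Ω*`.
-/

section Gibbs

open Real

lemma mul_log_sub_log_lt_sub {p q : ℝ} (hp : 0 < p) (hq : 0 < q) (hne : q ≠ p) :
    p * (log q - log p) < q - p := by
  have hd : log q - log p ≠ 0 := sub_ne_zero.2 fun h => hne (log_injOn_pos hq hp h)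
  have := add_one_lt_exp hd
  rw [exp_sub, exp_log hq, exp_log hp, lt_div_iff₀ hp] at this
  linarith

lemma mul_log_sub_log_le_sub {p q : ℝ} (hp : 0 < p) (hq : 0 < q) :
    p * (log q - log p) ≤ q - p := by
  rcases eq_or_ne q p with rfl | hne
  · simp
  · exact (mul_log_sub_log_lt_sub hp hq hne).le

variable {ι : Type*} [Fintype ι] {p q : ι → ℝ}

theorem sum_mul_log_le_sum_mul_log (hp : ∀ i, 0 < p i) (hq : ∀ i, 0 < q i)
    (hpq : ∑ i, q i = ∑ i, p i) : ∑ i, p i * log (q i) ≤ ∑ i, p i * log (p i) := by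
  have := sum_le_sum fun i (_ : i ∈ univ) => mul_log_sub_log_le_sub (hp i) (hq i)
  simp only [mul_sub, sum_sub_distrib, hpq, sub_self] at this
  linarith

theorem sum_mul_log_eq_sum_mul_log_iff (hp : ∀ i, 0 < p i) (hq : ∀ i, 0 < q i)
    (hpq : ∑ i, q i = ∑ i, p i) :
    ∑ i, p i * log (q i) = ∑ i, p i * log (p i) ↔ q = p := by
  have key := sum_eq_sum_iff_of_le fun i (_ : i ∈ univ) => mul_log_sub_log_le_sub (hp i) (hq i)
  have hterm : ∀ i, p i * (log (q i) - log (p i)) = q i - p i ↔ q i = p i := fun i =>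
    ⟨fun h => by_contra fun hne => (mul_log_sub_log_lt_sub (hp i) (hq i) hne).ne h,
      fun h => by simp [h]⟩
  rw [sum_sub_distrib, hpq, sub_self] at key
  simp only [mem_univ, forall_const, hterm] at key
  rw [funext_iff, ← key, ← sub_eq_zero, ← sum_sub_distrib]
  simp only [mul_sub]

end Gibbs

section Softmax

open Real

variable {m : ℕ}

lemma softmax_pos (t : Fin m → ℝ) (j : Fin m) : 0 < softmax t j :=
  div_pos (exp_pos _) (sum_pos (fun _ _ => exp_pos _) ⟨j, mem_univ j⟩)

lemma sum_softmax [NeZero m] (t : Fin m → ℝ) : ∑ j, softmax t j = 1 := by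
  simp only [softmax]
  rw [← sum_div, div_self (sum_pos (fun _ _ => exp_pos _) univ_nonempty).ne']

lemma log_softmax (t : Fin m → ℝ) (j : Fin m) :
    log (softmax t j) = t j - log (∑ k, exp (t k)) := by
  simp only [softmax]
  rw [log_div (exp_pos _).ne' (sum_pos (fun _ _ => exp_pos _) ⟨j, mem_univ j⟩).ne', log_exp]

lemma sub_eq_sub_of_softmax_eq {t u : Fin m → ℝ} (h : softmax u = softmax t) (j j' : Fin m) :
    u j - u j' = t j - t j' := by
  simpa [log_softmax] using congrArg (fun σ => log (σ j) - log (σ j')) h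

/-- Softmax only sees the scores up to a common shift; a key `s j₀ = 0` scores `0` under every
matrix and so pins the shift. -/
lemma dotProduct_mulVec_eq_of_softmax_eq {D : ℕ} {M M' : Matrix (Fin D) (Fin D) ℝ}
    {r : Fin D → ℝ} {s : Fin m → Fin D → ℝ}
    (h : softmax (fun j => r ⬝ᵥ (M *ᵥ s j)) = softmax (fun j => r ⬝ᵥ (M' *ᵥ s j)))
    {j₀ : Fin m} (hs : s j₀ = 0) (j : Fin m) : r ⬝ᵥ (M *ᵥ s j) = r ⬝ᵥ (M' *ᵥ s j) := by
  simpa [hs] using sub_eq_sub_of_softmax_eq h j j₀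

noncomputable def softmaxCrossEntropy (t u : Fin m → ℝ) : ℝ :=
  -∑ j, softmax t j * log (softmax u j)

variable [NeZero m]

lemma softmaxCrossEntropy_self_le (t u : Fin m → ℝ) :
    softmaxCrossEntropy t t ≤ softmaxCrossEntropy t u :=
  neg_le_neg <| sum_mul_log_le_sum_mul_log (softmax_pos t) (softmax_pos u)
    (by rw [sum_softmax, sum_softmax])

lemma softmaxCrossEntropy_eq_self_iff (t u : Fin m → ℝ) :
    softmaxCrossEntropy t u = softmaxCrossEntropy t t ↔ softmax u = softmax t :=
  neg_inj.trans <| sum_mul_log_eq_sum_mul_log_iff (softmax_pos t) (softmax_pos u)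
    (by rw [sum_softmax, sum_softmax])

variable {Ω : Type*} [MeasurableSpace Ω] {μ : Measure Ω} {t u : Ω → Fin m → ℝ}

lemma integral_softmaxCrossEntropy_self_le
    (ht : Integrable (fun ω => softmaxCrossEntropy (t ω) (t ω)) μ)
    (hu : Integrable (fun ω => softmaxCrossEntropy (t ω) (u ω)) μ) :
    ∫ ω, softmaxCrossEntropy (t ω) (t ω) ∂μ ≤ ∫ ω, softmaxCrossEntropy (t ω) (u ω) ∂μ :=
  integral_mono ht hu fun _ => softmaxCrossEntropy_self_le _ _

lemma ae_softmax_eq_of_integral_softmaxCrossEntropy_eq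
    (ht : Integrable (fun ω => softmaxCrossEntropy (t ω) (t ω)) μ)
    (hu : Integrable (fun ω => softmaxCrossEntropy (t ω) (u ω)) μ)
    (h : ∫ ω, softmaxCrossEntropy (t ω) (u ω) ∂μ = ∫ ω, softmaxCrossEntropy (t ω) (t ω) ∂μ) :
    ∀ᵐ ω ∂μ, softmax (u ω) = softmax (t ω) := by
  have hgap :
      ∫ ω, (softmaxCrossEntropy (t ω) (u ω) - softmaxCrossEntropy (t ω) (t ω)) ∂μ = 0 := by
    rw [integral_sub hu ht, h, sub_self]
  filter_upwards [(integral_eq_zero_iff_of_nonneg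
    (fun ω => sub_nonneg.2 (softmaxCrossEntropy_self_le _ _)) (hu.sub ht)).1 hgap] with ω hω
  exact (softmaxCrossEntropy_eq_self_iff _ _).1 (sub_eq_zero.1 hω)

end Softmax

section Probability

variable {Ω : Type*} [MeasurableSpace Ω] {μ : Measure Ω}

theorem integrable_comp_of_finite_range [IsFiniteMeasure μ] {E : Type*} [MeasurableSpace E]
    [MeasurableSingletonClass E] {V : Ω → E} (hV : Measurable V) (hfin : (Set.range V).Finite)
    (F : E → ℝ) : Integrable (fun ω => F (V ω)) μ := by
  have : Countable (Set.range V) := hfin.countable.to_subtype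
  have hmeas : Measurable fun ω => F (V ω) :=
    (measurable_of_countable fun v : Set.range V => F v).comp
      (hV.subtype_mk (h := Set.mem_range_self))
  obtain ⟨C, hC⟩ := (hfin.image fun v => ‖F v‖).bddAbove
  exact .of_bound hmeas.aestronglyMeasurable C
    (ae_of_all _ fun ω => hC (Set.mem_image_of_mem _ (Set.mem_range_self ω)))

lemma measure_preimage_singleton_ne_zero_of_bernoulli [IsProbabilityMeasure μ] {v : Ω → ℝ}
    (hv : Measurable v) (h01 : ∀ ω, v ω = 0 ∨ v ω = 1) {p : ℝ} (hp : p ∈ Set.Ioo (0 : ℝ) 1)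
    (hB : μ {ω | v ω = 1} = ENNReal.ofReal p) {c : ℝ} (hc : c = 0 ∨ c = 1) :
    μ (v ⁻¹' {c}) ≠ 0 := by
  rcases hc with rfl | rfl
  · have hcompl : v ⁻¹' {0} = {ω | v ω = 1}ᶜ := by
      ext ω
      rcases h01 ω with h | h <;> simp [h]
    rw [hcompl, prob_compl_eq_one_sub (s := {ω | v ω = 1}) (hv (measurableSet_singleton 1)), hB,
      Ne, tsub_eq_zero_iff_le, not_le]
    exact ENNReal.ofReal_lt_one.2 hp.2
  · exact hB ▸ (ENNReal.ofReal_pos.2 hp.1).ne'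

theorem ProbabilityTheory.iIndepFun.exists_forall_eq_and_of_ae {ι β : Type*} [Fintype ι]
    [MeasurableSpace β] [MeasurableSingletonClass β] {f : ι → Ω → β} (hf : iIndepFun f μ)
    {c : ι → β} (hc : ∀ i, μ (f i ⁻¹' {c i}) ≠ 0) {P : Ω → Prop} (hP : ∀ᵐ ω ∂μ, P ω) :
    ∃ ω, (∀ i, f i ω = c i) ∧ P ω := by
  have hne : μ (⋂ i, f i ⁻¹' {c i}) ≠ 0 := by
    rw [hf.meas_iInter fun i => ⟨{c i}, measurableSet_singleton _, rfl⟩]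
    exact prod_ne_zero_iff.2 fun i _ => hc i
  obtain ⟨ω, hω, hPω⟩ := Measure.exists_mem_of_measure_ne_zero_of_ae hne (ae_restrict_of_ae hP)
  exact ⟨ω, by simpa using hω, hPω⟩

end Probability

section TokenModel

variable {Ω : Type*} [MeasurableSpace Ω] {μ : Measure Ω} {N m D : ℕ}
  {a : Fin N → Ω → ℝ} {b : Fin m → Fin N → Ω → ℝ} {x y : Fin N → Fin D → ℝ}
  {r : Ω → Fin D → ℝ} {s : Fin m → Ω → Fin D → ℝ}

lemma integrable_softmaxCrossEntropy_tokens [IsFiniteMeasure μ]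
    (hameas : ∀ i, Measurable (a i)) (hbmeas : ∀ j i, Measurable (b j i))
    (ha01 : ∀ i ω, a i ω = 0 ∨ a i ω = 1) (hb01 : ∀ j i ω, b j i ω = 0 ∨ b j i ω = 1)
    (hr : r = fun ω k => ∑ i, a i ω * x i k) (hs : s = fun j ω k => ∑ i, b j i ω * y i k)
    (T M : Matrix (Fin D) (Fin D) ℝ) :
    Integrable (fun ω => softmaxCrossEntropy (fun j => r ω ⬝ᵥ (T *ᵥ s j ω))
      (fun j => r ω ⬝ᵥ (M *ᵥ s j ω))) μ := by
  subst hr hs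
  let token (c : Fin N → ℝ) (v : Fin N → Fin D → ℝ) : Fin D → ℝ := fun k => ∑ i, c i * v i k
  refine integrable_comp_of_finite_range (V := fun ω => (fun i => a i ω, fun j i => b j i ω))
    ((measurable_pi_iff.2 hameas).prodMk
      (measurable_pi_iff.2 fun j => measurable_pi_iff.2 (hbmeas j)))
    (((Set.Finite.pi fun _ => Set.toFinite {0, 1}).prod
      (Set.Finite.pi fun _ => Set.Finite.pi fun _ => Set.toFinite {0, 1})).subset ?_)
    (fun z => softmaxCrossEntropy (fun j => token z.1 x ⬝ᵥ (T *ᵥ token (z.2 j) y))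
      (fun j => token z.1 x ⬝ᵥ (M *ᵥ token (z.2 j) y)))
  rintro _ ⟨ω, rfl⟩
  exact ⟨fun i _ => ha01 i ω, fun j _ i _ => hb01 j i ω⟩

lemma exists_tokens_eq_and_of_ae [IsProbabilityMeasure μ] {p : ℝ} (hp : p ∈ Set.Ioo (0 : ℝ) 1)
    (hameas : ∀ i, Measurable (a i)) (hbmeas : ∀ j i, Measurable (b j i))
    (ha01 : ∀ i ω, a i ω = 0 ∨ a i ω = 1) (hb01 : ∀ j i ω, b j i ω = 0 ∨ b j i ω = 1)
    (haBer : ∀ i, μ {ω | a i ω = 1} = ENNReal.ofReal p)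
    (hbBer : ∀ j i, μ {ω | b j i ω = 1} = ENNReal.ofReal p)
    (hindep : iIndepFun
      (Sum.elim (fun i => a i) (fun ji : Fin m × Fin N => b ji.1 ji.2) :
        Fin N ⊕ Fin m × Fin N → Ω → ℝ) μ)
    (hr : r = fun ω k => ∑ i, a i ω * x i k) (hs : s = fun j ω k => ∑ i, b j i ω * y i k)
    (i₀ i₁ : Fin N) {j₀ j₁ : Fin m} (hj : j₀ ≠ j₁) {P : Ω → Prop} (hP : ∀ᵐ ω ∂μ, P ω) :
    ∃ ω, r ω = x i₀ ∧ s j₀ ω = 0 ∧ s j₁ ω = y i₁ ∧ P ω := by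
  subst hr hs
  set c : Fin N ⊕ Fin m × Fin N → ℝ := Sum.elim (Pi.single i₀ 1) (Pi.single (j₁, i₁) 1)
  have hc : ∀ t, c t = 0 ∨ c t = 1 := by
    rintro (i | ji) <;> simp only [c, Sum.elim_inl, Sum.elim_inr, Pi.single_apply] <;>
      split_ifs <;> simp
  obtain ⟨ω, hω, hPω⟩ := hindep.exists_forall_eq_and_of_ae (c := c)
    (Sum.forall.2 ⟨fun i => measure_preimage_singleton_ne_zero_of_bernoulli (hameas i) (ha01 i) hp
      (haBer i) (hc (.inl i)), fun ji => measure_preimage_singleton_ne_zero_of_bernoulli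
      (hbmeas ji.1 ji.2) (hb01 ji.1 ji.2) hp (hbBer ji.1 ji.2) (hc (.inr ji))⟩) hP
  have ha : ∀ i, a i ω = c (.inl i) := fun i => hω (.inl i)
  have hb : ∀ j i, b j i ω = c (.inr (j, i)) := fun j i => hω (.inr (j, i))
  refine ⟨ω, ?_, ?_, ?_, hPω⟩ <;> ext k <;> simp [ha, hb, c, Pi.single_apply, hj]

end TokenModel

section LinearAlgebra

variable {n : Type*} [Fintype n]

lemma Matrix.inv_smul_one [DecidableEq n] {K : Type*} [Field K] {c : K} (hc : c ≠ 0) :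
    (c • (1 : Matrix n n K))⁻¹ = c⁻¹ • 1 :=
  inv_eq_left_inv (by rw [smul_mul_smul_comm, inv_mul_cancel₀ hc, one_mul, one_smul])

lemma Matrix.isUnit_smul_one [DecidableEq n] {K : Type*} [Field K] {c : K} (hc : c ≠ 0) :
    IsUnit (c • (1 : Matrix n n K)) := by
  simpa [Algebra.algebraMap_eq_smul_one] using (Ne.isUnit hc).map (algebraMap K (Matrix n n K))

lemma Matrix.transpose_mul_mul_apply {k k' R : Type*} [NonUnitalSemiring R] (X : Matrix n k R)
    (M : Matrix n n R) (Y : Matrix n k' R) (i : k) (j : k') :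
    (Xᵀ * M * Y) i j = (fun l => X l i) ⬝ᵥ (M *ᵥ fun l => Y l j) := by
  rw [mul_apply', dotProduct_mulVec]
  rfl

lemma Matrix.eq_of_transpose_mul_mul_eq [DecidableEq n] {k k' R : Type*} [Fintype k] [Fintype k'] [Ring R]
    {X : Matrix n k R} {Y : Matrix n k' R} (hX : IsUnit (X * Xᵀ)) (hY : IsUnit (Y * Yᵀ))
    {M M' : Matrix n n R} (h : Xᵀ * M * Y = Xᵀ * M' * Y) : M = M' := by
  have : X * Xᵀ * (M - M') * (Y * Yᵀ) = 0 := by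
    simpa [Matrix.mul_assoc, Matrix.mul_sub, Matrix.sub_mul, sub_eq_zero] using
      congrArg (X * · * Yᵀ) h
  rwa [hY.mul_left_eq_zero, hX.mul_right_eq_zero, sub_eq_zero] at this

end LinearAlgebra

/-- **Exact alignment under isotropy.**
If the feature sets are in isotropic position (`X Xᵀ = a I`, `Y Yᵀ = b I` with `a, b > 0`),
the teacher is `Ω_T = α ((X Xᵀ)⁻¹ x₁)((Y Yᵀ)⁻¹ y₁)ᵀ` with `α > 0`, tokens are random
Bernoulli(p) sums of features with `p ∈ (0,1)` and `m ≥ 2` keys, then the unique global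
minimizer of the population cross-entropy objective `L` is `Ω* = (α/(ab)) x₁ y₁ᵀ` — a
rank-one matrix whose nonzero left/right singular vectors are parallel to `x₁`/`y₁`. -/
theorem exact_alignment_isotropy
    {Ω : Type*} [MeasurableSpace Ω] (μ : Measure Ω) [IsProbabilityMeasure μ]
    {N D m : ℕ} (hN : 1 ≤ N) (hm : 2 ≤ m) (p : ℝ) (hp : p ∈ Set.Ioo (0 : ℝ) 1)
    (x y : Fin N → Fin D → ℝ)
    (X : Matrix (Fin D) (Fin N) ℝ) (hX : X = Matrix.of fun k i => x i k)
    (Y : Matrix (Fin D) (Fin N) ℝ) (hY : Y = Matrix.of fun k i => y i k)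
    (aiso biso : ℝ) (haiso : 0 < aiso) (hbiso : 0 < biso)
    (hXiso : X * Xᵀ = aiso • (1 : Matrix (Fin D) (Fin D) ℝ))
    (hYiso : Y * Yᵀ = biso • (1 : Matrix (Fin D) (Fin D) ℝ))
    (α : ℝ)
    (OmT : Matrix (Fin D) (Fin D) ℝ)
    (hOmT : OmT = α • Matrix.vecMulVec
      ((X * Xᵀ)⁻¹ *ᵥ x ⟨0, by omega⟩) ((Y * Yᵀ)⁻¹ *ᵥ y ⟨0, by omega⟩))
    -- Bernoulli(p) coefficients, all mutually independent
    (a : Fin N → Ω → ℝ) (b : Fin m → Fin N → Ω → ℝ)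
    (hameas : ∀ i, Measurable (a i)) (hbmeas : ∀ j i, Measurable (b j i))
    (ha01 : ∀ i ω, a i ω = 0 ∨ a i ω = 1) (hb01 : ∀ j i ω, b j i ω = 0 ∨ b j i ω = 1)
    (haBer : ∀ i, μ {ω | a i ω = 1} = ENNReal.ofReal p)
    (hbBer : ∀ j i, μ {ω | b j i ω = 1} = ENNReal.ofReal p)
    (hindep : iIndepFun
      (Sum.elim (fun i => a i) (fun ji : Fin m × Fin N => b ji.1 ji.2) :
        Fin N ⊕ Fin m × Fin N → Ω → ℝ) μ)
    -- tokens
    (r : Ω → Fin D → ℝ) (hr : r = fun ω k => ∑ i, a i ω * x i k)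
    (s : Fin m → Ω → Fin D → ℝ) (hs : s = fun j ω k => ∑ i, b j i ω * y i k)
    -- population objective
    (L : Matrix (Fin D) (Fin D) ℝ → ℝ)
    (hL : ∀ Om : Matrix (Fin D) (Fin D) ℝ, L Om =
      ∫ ω, -∑ j, softmax (fun j' => r ω ⬝ᵥ (OmT *ᵥ s j' ω)) j *
        Real.log (softmax (fun j' => r ω ⬝ᵥ (Om *ᵥ s j' ω)) j) ∂μ)
    (OmStar : Matrix (Fin D) (Fin D) ℝ)
    (hOmStar : OmStar = (α / (aiso * biso)) •
      Matrix.vecMulVec (x ⟨0, by omega⟩) (y ⟨0, by omega⟩)) :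
    ∀ Om : Matrix (Fin D) (Fin D) ℝ, L OmStar ≤ L Om ∧ (L Om = L OmStar ↔ Om = OmStar) := by
  have : NeZero m := ⟨by omega⟩
  have hteacher : OmT = OmStar := by
    rw [hOmT, hOmStar, hXiso, hYiso, inv_smul_one haiso.ne', inv_smul_one hbiso.ne']
    ext k l
    simp only [Matrix.smul_apply, vecMulVec_apply, smul_mulVec, one_mulVec, Pi.smul_apply,
      smul_eq_mul]
    field_simp
  subst hteacher
  have hint := integrable_softmaxCrossEntropy_tokens (μ := μ) hameas hbmeas ha01 hb01 hr hs OmT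
  have hL' : ∀ M, L M = ∫ ω, softmaxCrossEntropy (fun j => r ω ⬝ᵥ (OmT *ᵥ s j ω))
      (fun j => r ω ⬝ᵥ (M *ᵥ s j ω)) ∂μ := hL
  intro Om
  refine ⟨?_, fun hLeq => ?_, fun h => h ▸ rfl⟩
  · rw [hL', hL']
    exact integral_softmaxCrossEntropy_self_le (hint OmT) (hint Om)
  have hae := ae_softmax_eq_of_integral_softmaxCrossEntropy_eq (hint OmT) (hint Om)
    (by rw [← hL', ← hL', hLeq])
  refine eq_of_transpose_mul_mul_eq (hXiso ▸ isUnit_smul_one haiso.ne')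
    (hYiso ▸ isUnit_smul_one hbiso.ne') (ext fun i₀ i₁ => ?_)
  obtain ⟨ω, hrω, hs₀, hs₁, hsoft⟩ := exists_tokens_eq_and_of_ae hp hameas hbmeas ha01 hb01
    haBer hbBer hindep hr hs i₀ i₁ (j₀ := ⟨0, by omega⟩) (j₁ := ⟨1, by omega⟩) (by simp) hae
  subst hX hY
  rw [transpose_mul_mul_apply, transpose_mul_mul_apply]
  have hscore := dotProduct_mulVec_eq_of_softmax_eq hsoft hs₀ ⟨1, by omega⟩
  rw [hrω, hs₁] at hscore
  exact hscore
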